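/- The Mainardi function M_ν(z) = ∑_{n=0}^∞ (-z)^n / (n! Γ(-νn + 1 - ν)) satisfies M_{1/2}(z) = (1/√π) e^{-z²/4} for all real z. -/
import Mathlib

open Real

/-- The Wright function `W(z, α, β) = ∑_{n≥0} z^n / (n! Γ(αn + β))`
(with the convention `1/Γ = 0` at the poles of `Γ`). -/
noncomputable def wright (z α β : ℝ) : ℝ :=
  ∑' n : ℕ, z ^ n / ((Nat.factorial n : ℝ) * Real.Gamma (α * n + β))

/-- The Mainardi function `M_ν(z) = W(-z, -ν, 1-ν)`. -/
noncomputable def mainardi (ν z : ℝ) : ℝ :=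
  ∑' n : ℕ, (-z) ^ n / ((Nat.factorial n : ℝ) * Real.Gamma (-ν * n + 1 - ν))

/-- The Gauss error function `erf y = (2/√π) ∫₀^y e^{-t²} dt`. -/
noncomputable def erf (y : ℝ) : ℝ :=
  (2 / Real.sqrt π) * ∫ t in (0:ℝ)..y, Real.exp (-t ^ 2)

lemma gamma_half_sub (k : ℕ) :
    Real.Gamma (1/2 - k) = (-4 : ℝ) ^ k * (Nat.factorial k) * Real.sqrt π /
      (Nat.factorial (2 * k)) := by
  induction k with
  | zero => norm_num [Real.Gamma_one_half_eq]
  | succ k ih =>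
    have hx : (1/2 - (k+1) : ℝ) + 1 = 1/2 - k := by ring
    have hG : Real.Gamma (1/2 - k) = (1/2 - (k+1)) * Real.Gamma (1/2 - (k+1)) := by
      rw [← hx, Real.Gamma_add_one]
      intro h
      have : (k : ℝ) = -1/2 := by linarith
      have : (0:ℝ) ≤ -1/2 := this ▸ Nat.cast_nonneg k
      linarith
    have hne : (1/2 - (k+1) : ℝ) ≠ 0 := by
      intro h
      have : (k : ℝ) = -1/2 := by push_cast at h ⊢; linarith
      have : (0:ℝ) ≤ -1/2 := this ▸ Nat.cast_nonneg k
      linarith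
    have h2 : Real.Gamma (1/2 - (k+1)) = Real.Gamma (1/2 - k) / (1/2 - (k+1)) := by
      rw [eq_div_iff hne, mul_comm]
      exact hG.symm
    have e1 : Nat.factorial (2 * (k+1)) = (2*k+2) * ((2*k+1) * Nat.factorial (2*k)) := by
      rw [show 2*(k+1) = (2*k+1)+1 by ring, Nat.factorial_succ, Nat.factorial_succ]
    have e2 : Nat.factorial (k+1) = (k+1) * Nat.factorial k := Nat.factorial_succ k
    have hf1 : (Nat.factorial (2*k) : ℝ) ≠ 0 := Nat.cast_ne_zero.2 (Nat.factorial_ne_zero _)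
    apply mul_left_cancel₀ hne
    push_cast [e1, e2]
    rw [← hG, ih]
    have h1 : (2*(k:ℝ)+2) ≠ 0 := by positivity
    have h3 : (2*(k:ℝ)+1) ≠ 0 := by positivity
    field_simp
    ring
  
/-- The Mainardi function with parameter `1/2` is the Gaussian:
`M_{1/2}(z) = (1/√π) e^{-z²/4}` for all real `z`. -/
theorem mainardi_half (z : ℝ) :
    mainardi (1/2) z = (1 / Real.sqrt π) * Real.exp (-z ^ 2 / 4) := by
  unfold mainardi
  set f : ℕ → ℝ := fun n => (-z) ^ n / ((Nat.factorial n : ℝ) * Real.Gamma (-(1/2) * n + 1 - 1/2)) with hf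
  have hinj : Function.Injective (fun k : ℕ => 2 * k) := fun a b h => by simp only at h; omega
  have hsupp : Function.support f ⊆ Set.range (fun k : ℕ => 2 * k) := by
    intro n hn
    rcases Nat.even_or_odd n with he | ho
    · obtain ⟨m, hm⟩ := he
      exact ⟨m, by simp only; omega⟩
    · exfalso
      obtain ⟨m, hm⟩ := ho
      apply hn
      have : (-(1/2) * n + 1 - 1/2 : ℝ) = -m := by
        rw [hm]; push_cast; ring
      simp only [hf]
      rw [this, show Real.Gamma (-(m:ℝ)) = 0 from (Real.Gamma_eq_zero_iff _).2 ⟨m, rfl⟩,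
        mul_zero, div_zero]
  have key : ∑' k : ℕ, f (2 * k) = (1 / Real.sqrt π) * Real.exp (-z ^ 2 / 4) := by
    have hterm : ∀ k : ℕ, f (2 * k) = (1 / Real.sqrt π) * ((-z^2/4) ^ k / (Nat.factorial k)) := by
      intro k
      have hg : (-(1/2) * (2*k : ℕ) + 1 - 1/2 : ℝ) = 1/2 - k := by push_cast; ring
      simp only [hf, hg, gamma_half_sub]
      have h4 : ((-4 : ℝ)) ^ k ≠ 0 := by positivity
      have hfk : (Nat.factorial k : ℝ) ≠ 0 := Nat.cast_ne_zero.2 (Nat.factorial_ne_zero _)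
      have hf2k : (Nat.factorial (2*k) : ℝ) ≠ 0 := Nat.cast_ne_zero.2 (Nat.factorial_ne_zero _)
      have hsp : Real.sqrt π ≠ 0 := by positivity
      have hz : (-z) ^ (2*k) = z ^ (2*k) := by
        rw [neg_pow, pow_mul, neg_one_sq, one_pow, one_mul]
      rw [hz]
      have hz2 : (-z^2/4 : ℝ) ^ k = z ^ (2*k) / (-4)^k := by
        rw [show (-z^2/4 : ℝ) = z^2/(-4) by ring, div_pow, ← pow_mul]
      rw [hz2]
      field_simp
      try ring
      try tauto
    simp_rw [hterm]
    rw [tsum_mul_left]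
    congr 1
    rw [Real.exp_eq_exp_ℝ, NormedSpace.exp_eq_tsum_div]
  rw [← hinj.tsum_eq hsupp]
  exact key
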